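/- Let μ_n = (q_n,s_n), for n = 1,2,..., and μ = (q,s) be IC, IR, and NPT Γ-mechanisms with extended buyer payoff functions b_n and b respectively, such that b_n converges pointwise to b on ℝ^k and μ is seller favorable. Then for every random valuation X with values in ℝ_+^k and finite expectation, limsup_{n→∞} E[s_n(X)] ≤ E[s(X)]. -/

import Mathlib

/-!
For an IC mechanism with allocations bounded by `C`, the extended payoff `b` is a supremum of
affine functions, hence convex and `C`-Lipschitz with `|b x| ≤ C ‖x‖`. Reporting `x` when the
valuation is `x + δ x` is one option in that supremum, which gives
`s x ≤ (b (x + δ x) - b x) / δ - b x` for all `δ > 0`, with the right side `O(‖x‖)`.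
For the mechanisms `μₙ` this bound passes to the limit `n → ∞` by dominated convergence,
since `bₙ → b` pointwise. For `μ` the right side decreases, by convexity, to
`b'(x; x) - b x = s x` as `δ → 0⁺` (seller favorability), and a second dominated convergence
finishes the proof.
-/

open MeasureTheory Filter

noncomputable section

abbrev E (k : ℕ) := EuclideanSpace ℝ (Fin k)

def orthant (k : ℕ) : Set (E k) := {x | ∀ i, 0 ≤ x i}

/-- The dot product `g · x` on `ℝ^k`. -/
def dotp {k : ℕ} (g x : E k) : ℝ := ∑ i, g i * x i

def IsAlloc {k : ℕ} (Γ : Set (E k)) (q : E k → E k) : Prop :=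
  ∀ x ∈ orthant k, q x ∈ Γ

def IsIC {k : ℕ} (q : E k → E k) (s : E k → ℝ) : Prop :=
  ∀ x ∈ orthant k, ∀ y ∈ orthant k, dotp (q x) x - s x ≥ dotp (q y) x - s y

def IsIR {k : ℕ} (q : E k → E k) (s : E k → ℝ) : Prop :=
  ∀ x ∈ orthant k, 0 ≤ dotp (q x) x - s x

def IsNPT {k : ℕ} (s : E k → ℝ) : Prop :=
  ∀ x ∈ orthant k, 0 ≤ s x

/-- The set of subgradients of `f` at `x`. -/
def Subgrad {k : ℕ} (f : E k → ℝ) (x : E k) : Set (E k) :=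
  {g | ∀ y, f y - f x ≥ dotp g (y - x)}

/-- `b ∈ B_Γ`: convex on `ℝ^k`, `b 0 = 0`, and a subgradient in `Γ` at every point. -/
def BClass {k : ℕ} (Γ : Set (E k)) (b : E k → ℝ) : Prop :=
  ConvexOn ℝ Set.univ b ∧ b 0 = 0 ∧ ∀ x, (Subgrad b x ∩ Γ).Nonempty

/-- One-sided directional derivative `f′(x;y) = lim_{δ→0⁺} (f(x+δy)-f(x))/δ`. -/
def dirDeriv {k : ℕ} (b : E k → ℝ) (x y : E k) : ℝ :=
  limUnder (nhdsWithin (0:ℝ) (Set.Ioi 0)) fun δ => (b (x + δ • y) - b x) / δ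

/-- The extended buyer payoff function `b(x) = sup_{z ∈ ℝ₊^k} [q(z)·x − s(z)]`. -/
def extPayoff {k : ℕ} (q : E k → E k) (s : E k → ℝ) (x : E k) : ℝ :=
  sSup ((fun z => dotp (q z) x - s z) '' orthant k)

def SellerFavorable {k : ℕ} (q : E k → E k) (s : E k → ℝ) : Prop :=
  ∀ x ∈ orthant k, s x = dirDeriv (extPayoff q s) x x - extPayoff q s x

open Set Topology

section DirSlope
variable {V : Type*} [AddCommGroup V] [Module ℝ V]

def dirSlope (b : V → ℝ) (x y : V) (δ : ℝ) : ℝ := (b (x + δ • y) - b x) / δ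

lemma dirSlope_eq_slope (b : V → ℝ) (x y : V) (δ : ℝ) :
    dirSlope b x y δ = slope (fun t : ℝ => b (x + t • y)) 0 δ := by
  simp [dirSlope, slope_def_field]

lemma ConvexOn.comp_line {b : V → ℝ} (hb : ConvexOn ℝ univ b) (x y : V) :
    ConvexOn ℝ univ (fun t : ℝ => b (x + t • y)) :=
  (hb.translate_right x).comp_linearMap (LinearMap.toSpanSingleton ℝ V y)

lemma ConvexOn.monotoneOn_dirSlope {b : V → ℝ} (hb : ConvexOn ℝ univ b) (x y : V) :
    MonotoneOn (dirSlope b x y) (Ioi 0) := by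
  intro δ hδ ε hε hδε
  simp only [dirSlope_eq_slope]
  exact (hb.comp_line x y).slope_mono (mem_univ 0) ⟨mem_univ δ, ne_of_gt hδ⟩
    ⟨mem_univ ε, ne_of_gt hε⟩ hδε

lemma ConvexOn.exists_tendsto_dirSlope {b : V → ℝ} (hb : ConvexOn ℝ univ b) (x y : V) :
    ∃ d, Tendsto (dirSlope b x y) (𝓝[>] 0) (𝓝 d) := by
  have hd := (hb.comp_line x y).hasDerivWithinAt_rightDeriv_of_mem_interior
    (x := 0) (by simp)
  rw [hasDerivWithinAt_iff_tendsto_slope' self_notMem_Ioi] at hd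
  exact ⟨_, funext (dirSlope_eq_slope b x y) ▸ hd⟩

end DirSlope

section NormedDirSlope
variable {V : Type*} [NormedAddCommGroup V] [NormedSpace ℝ V]

lemma abs_dirSlope_self_sub_le {b : V → ℝ} {C : ℝ} (hb : ∀ y, |b y| ≤ C * ‖y‖) {δ : ℝ}
    (hδ : 0 < δ) (x : V) : |dirSlope b x x δ - b x| ≤ 2 * C * (1 + δ) / δ * ‖x‖ := by
  have hbδ : |b ((1 + δ) • x)| ≤ C * ((1 + δ) * ‖x‖) := by
    simpa [norm_smul, abs_of_pos (by linarith : 0 < 1 + δ)] using hb ((1 + δ) • x)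
  have hbx := hb x
  have hCx : 0 ≤ C * ‖x‖ := (abs_nonneg _).trans hbx
  have e : dirSlope b x x δ - b x = (b ((1 + δ) • x) - (1 + δ) * b x) / δ := by
    rw [dirSlope, add_smul, one_smul]
    field_simp
    ring
  calc |dirSlope b x x δ - b x| = |b ((1 + δ) • x) - (1 + δ) * b x| / δ := by
        rw [e, abs_div, abs_of_pos hδ]
    _ ≤ (|b ((1 + δ) • x)| + (1 + δ) * |b x|) / δ := by
        gcongr
        calc _ ≤ |b ((1 + δ) • x)| + |(1 + δ) * b x| := abs_sub _ _
          _ = _ := by rw [abs_mul, abs_of_pos (by linarith : 0 < 1 + δ)]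
    _ ≤ (C * ((1 + δ) * ‖x‖) + (1 + δ) * (C * ‖x‖)) / δ := by gcongr
    _ = 2 * C * (1 + δ) / δ * ‖x‖ := by ring

lemma Continuous.dirSlope_self_sub {b : V → ℝ} (hb : Continuous b) (δ : ℝ) :
    Continuous fun x => dirSlope b x x δ - b x :=
  (((hb.comp (continuous_id.add (continuous_const_smul δ))).sub hb).div_const δ).sub hb

end NormedDirSlope

lemma dotp_eq_inner {k : ℕ} (g x : E k) : dotp g x = inner ℝ g x := by
  simp [dotp, PiLp.inner_apply, mul_comm]

lemma abs_dotp_le {k : ℕ} (g x : E k) : |dotp g x| ≤ ‖g‖ * ‖x‖ :=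
  dotp_eq_inner g x ▸ abs_real_inner_le_norm g x

lemma zero_mem_orthant (k : ℕ) : (0 : E k) ∈ orthant k := fun _ => le_rfl

section Mechanism
variable {k : ℕ} {q : E k → E k} {s : E k → ℝ} {C : ℝ}

lemma extPayoff_le_of_forall {x : E k} {a : ℝ} (h : ∀ z ∈ orthant k, dotp (q z) x - s z ≤ a) :
    extPayoff q s x ≤ a :=
  csSup_le ⟨_, mem_image_of_mem _ (zero_mem_orthant k)⟩ (forall_mem_image.2 h)

variable (hC : ∀ x ∈ orthant k, ‖q x‖ ≤ C) (hNPT : IsNPT s)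
include hC hNPT

lemma payoff_le_mul_norm {z : E k} (hz : z ∈ orthant k) (x : E k) :
    dotp (q z) x - s z ≤ C * ‖x‖ := by
  have := (le_abs_self _).trans (abs_dotp_le (q z) x)
  nlinarith [hC z hz, hNPT z hz, norm_nonneg x]

lemma le_extPayoff {z : E k} (hz : z ∈ orthant k) (x : E k) :
    dotp (q z) x - s z ≤ extPayoff q s x :=
  le_csSup ⟨C * ‖x‖, forall_mem_image.2 fun _ hz' => payoff_le_mul_norm hC hNPT hz' x⟩
    (mem_image_of_mem _ hz)

lemma abs_extPayoff_le (hIR : IsIR q s) (x : E k) : |extPayoff q s x| ≤ C * ‖x‖ := by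
  have hs0 : s 0 ≤ 0 := by simpa [dotp] using hIR 0 (zero_mem_orthant k)
  have hq0 := neg_le_of_abs_le ((abs_dotp_le (q 0) x).trans
    (mul_le_mul_of_nonneg_right (hC 0 (zero_mem_orthant k)) (norm_nonneg x)))
  refine abs_le.2 ⟨?_, extPayoff_le_of_forall fun z hz => payoff_le_mul_norm hC hNPT hz x⟩
  linarith [le_extPayoff hC hNPT (zero_mem_orthant k) x]

lemma extPayoff_eq_of_isIC (hIC : IsIC q s) {x : E k} (hx : x ∈ orthant k) :
    extPayoff q s x = dotp (q x) x - s x :=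
  le_antisymm (extPayoff_le_of_forall fun z hz => hIC x hx z hz) (le_extPayoff hC hNPT hx x)

lemma lipschitzWith_extPayoff : LipschitzWith C.toNNReal (extPayoff q s) := by
  refine LipschitzWith.of_le_add_mul' C fun x y => extPayoff_le_of_forall fun z hz => ?_
  have hxy : dotp (q z) x - s z = (dotp (q z) y - s z) + dotp (q z) (x - y) := by
    simp only [dotp_eq_inner, inner_sub_right]; ring
  rw [hxy, dist_eq_norm]
  have := (le_abs_self _).trans (abs_dotp_le (q z) (x - y))
  nlinarith [le_extPayoff hC hNPT hz y, hC z hz, norm_nonneg (x - y)]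

lemma convexOn_extPayoff : ConvexOn ℝ univ (extPayoff q s) := by
  refine ⟨convex_univ, fun x _ y _ a c ha hc hac => extPayoff_le_of_forall fun z hz => ?_⟩
  have hcomb : dotp (q z) (a • x + c • y) - s z
      = a * (dotp (q z) x - s z) + c * (dotp (q z) y - s z) := by
    simp only [dotp_eq_inner, inner_add_right, inner_smul_right]
    linear_combination (s z) * hac
  rw [hcomb, smul_eq_mul, smul_eq_mul]
  gcongr <;> exact le_extPayoff hC hNPT hz _

lemma le_dirSlope_sub_extPayoff (hIC : IsIC q s) {x : E k} (hx : x ∈ orthant k) {δ : ℝ}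
    (hδ : 0 < δ) : s x ≤ dirSlope (extPayoff q s) x x δ - extPayoff q s x := by
  have hopt := le_extPayoff hC hNPT hx (x + δ • x)
  have hlin : dotp (q x) (x + δ • x) = dotp (q x) x + δ * dotp (q x) x := by
    simp only [dotp_eq_inner, inner_add_right, inner_smul_right]
  rw [dirSlope, le_sub_iff_add_le, le_div_iff₀ hδ, extPayoff_eq_of_isIC hC hNPT hIC hx]
  linarith

end Mechanism

lemma limsup_le_of_le_of_tendsto {u v : ℕ → ℝ} {L : ℝ} (hu : ∀ n, 0 ≤ u n)
    (huv : ∀ n, u n ≤ v n) (hv : Tendsto v atTop (𝓝 L)) : limsup u atTop ≤ L :=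
  hv.limsup_eq ▸ limsup_le_limsup (Eventually.of_forall huv)
    (isCoboundedUnder_le_of_le atTop hu) hv.isBoundedUnder_le

section Revenue
variable {k : ℕ} {C : ℝ} {Ω : Type*} [MeasurableSpace Ω] {P : Measure Ω} {X : Ω → E k}

lemma limsup_integral_le_integral_dirSlope_sub {qn : ℕ → E k → E k} {sn : ℕ → E k → ℝ}
    (hC : ∀ n, ∀ x ∈ orthant k, ‖qn n x‖ ≤ C) (hIC : ∀ n, IsIC (qn n) (sn n))
    (hIR : ∀ n, IsIR (qn n) (sn n)) (hNPT : ∀ n, IsNPT (sn n)) {b : E k → ℝ}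
    (hconv : ∀ x, Tendsto (fun n => extPayoff (qn n) (sn n) x) atTop (𝓝 (b x)))
    (hXm : Measurable X) (hXpos : ∀ ω, X ω ∈ orthant k) (hXint : Integrable (fun ω => ‖X ω‖) P)
    {δ : ℝ} (hδ : 0 < δ) :
    limsup (fun n => ∫ ω, sn n (X ω) ∂P) atTop ≤ ∫ ω, dirSlope b (X ω) (X ω) δ - b (X ω) ∂P := by
  set G : ℕ → Ω → ℝ := fun n ω =>
    dirSlope (extPayoff (qn n) (sn n)) (X ω) (X ω) δ - extPayoff (qn n) (sn n) (X ω)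
  have hGmeas : ∀ n, AEStronglyMeasurable (G n) P := fun n =>
    ((lipschitzWith_extPayoff (hC n) (hNPT n)).continuous.dirSlope_self_sub δ).measurable.comp
      hXm |>.aestronglyMeasurable
  have hGbound : ∀ n, ∀ᵐ ω ∂P, ‖G n ω‖ ≤ 2 * C * (1 + δ) / δ * ‖X ω‖ := fun n =>
    ae_of_all _ fun ω => abs_dirSlope_self_sub_le (abs_extPayoff_le (hC n) (hNPT n) (hIR n)) hδ _
  have hbound_int : Integrable (fun ω => 2 * C * (1 + δ) / δ * ‖X ω‖) P := hXint.const_mul _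
  have hGlim : ∀ᵐ ω ∂P, Tendsto (fun n => G n ω) atTop
      (𝓝 (dirSlope b (X ω) (X ω) δ - b (X ω))) :=
    ae_of_all _ fun ω => (((hconv _).sub (hconv _)).div_const δ).sub (hconv _)
  refine limsup_le_of_le_of_tendsto (fun n => integral_nonneg fun ω => hNPT n _ (hXpos ω))
    (fun n => integral_mono_of_nonneg (ae_of_all _ fun ω => hNPT n _ (hXpos ω))
      (hbound_int.mono' (hGmeas n) (hGbound n))
      (ae_of_all _ fun ω => le_dirSlope_sub_extPayoff (hC n) (hNPT n) (hIC n) (hXpos ω) hδ))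
    (tendsto_integral_of_dominated_convergence _ hGmeas hbound_int hGbound hGlim)

lemma tendsto_integral_dirSlope_sub_extPayoff {q : E k → E k} {s : E k → ℝ}
    (hC : ∀ x ∈ orthant k, ‖q x‖ ≤ C) (hIC : IsIC q s) (hIR : IsIR q s) (hNPT : IsNPT s)
    (hSF : SellerFavorable q s)
    (hXm : Measurable X) (hXpos : ∀ ω, X ω ∈ orthant k) (hXint : Integrable (fun ω => ‖X ω‖) P) :
    Tendsto (fun δ => ∫ ω, dirSlope (extPayoff q s) (X ω) (X ω) δ - extPayoff q s (X ω) ∂P)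
      (𝓝[>] 0) (𝓝 (∫ ω, s (X ω) ∂P)) := by
  set b := extPayoff q s
  have hbconv := convexOn_extPayoff hC hNPT
  have hGmeas : ∀ δ, AEStronglyMeasurable (fun ω => dirSlope b (X ω) (X ω) δ - b (X ω)) P :=
    fun δ => ((lipschitzWith_extPayoff hC hNPT).continuous.dirSlope_self_sub δ).measurable.comp
      hXm |>.aestronglyMeasurable
  -- for `δ ≤ 1`, the gap is squeezed between `s ≥ 0` and its value at `δ = 1`
  have hGbound : ∀ᶠ δ in 𝓝[>] 0, ∀ᵐ ω ∂P,
      ‖dirSlope b (X ω) (X ω) δ - b (X ω)‖ ≤ 4 * C * ‖X ω‖ := by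
    filter_upwards [Ioo_mem_nhdsGT one_pos] with δ ⟨hδ, hδ1⟩
    refine ae_of_all _ fun ω => ?_
    have hs := le_dirSlope_sub_extPayoff hC hNPT hIC (hXpos ω) hδ
    have hmono := hbconv.monotoneOn_dirSlope (X ω) (X ω) hδ (mem_Ioi.2 one_pos) hδ1.le
    have hone := (abs_le.1 (abs_dirSlope_self_sub_le (abs_extPayoff_le hC hNPT hIR) one_pos
      (X ω))).2
    rw [Real.norm_eq_abs, abs_of_nonneg ((hNPT _ (hXpos ω)).trans hs)]
    norm_num at hone
    linarith
  have hlim : ∀ᵐ ω ∂P, Tendsto (fun δ => dirSlope b (X ω) (X ω) δ - b (X ω)) (𝓝[>] 0)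
      (𝓝 (s (X ω))) :=
    ae_of_all _ fun ω => hSF _ (hXpos ω) ▸
      (tendsto_nhds_limUnder (hbconv.exists_tendsto_dirSlope (X ω) (X ω))).sub_const _
  exact tendsto_integral_filter_of_dominated_convergence _ (Eventually.of_forall hGmeas) hGbound
    (hXint.const_mul _) hlim

end Revenue

theorem stmt7_general {k : ℕ} (Γ : Set (E k))
    (hΓc : IsCompact Γ)
    (qn : ℕ → E k → E k) (sn : ℕ → E k → ℝ)
    (hqn : ∀ n, IsAlloc Γ (qn n)) (hICn : ∀ n, IsIC (qn n) (sn n))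
    (hIRn : ∀ n, IsIR (qn n) (sn n)) (hNPTn : ∀ n, IsNPT (sn n))
    (q : E k → E k) (s : E k → ℝ)
    (hq : IsAlloc Γ q) (hIC : IsIC q s) (hIR : IsIR q s) (hNPT : IsNPT s)
    (hconv : ∀ x : E k,
      Tendsto (fun n => extPayoff (qn n) (sn n) x) atTop (nhds (extPayoff q s x)))
    (hSF : SellerFavorable q s)
    {Ω : Type*} [MeasurableSpace Ω] (P : Measure Ω)
    (X : Ω → E k) (hXm : Measurable X) (hXpos : ∀ ω, X ω ∈ orthant k)
    (hXint : Integrable (fun ω => ‖X ω‖) P) :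
    limsup (fun n => ∫ ω, sn n (X ω) ∂P) atTop ≤ ∫ ω, s (X ω) ∂P := by
  obtain ⟨C, hC⟩ := isBounded_iff_forall_norm_le.1 hΓc.isBounded
  refine ge_of_tendsto (tendsto_integral_dirSlope_sub_extPayoff (fun x hx => hC _ (hq x hx))
    hIC hIR hNPT hSF hXm hXpos hXint) ?_
  filter_upwards [self_mem_nhdsWithin] with δ hδ
  exact limsup_integral_le_integral_dirSlope_sub (fun n x hx => hC _ (hqn n x hx)) hICn hIRn
    hNPTn hconv hXm hXpos hXint hδ

/-- under the hypotheses of Statement 6, for every integrable random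
valuation `X`, `limsup E[sₙ(X)] ≤ E[s(X)]`. -/
theorem stmt7 {k : ℕ} (hk : 1 ≤ k) (Γ : Set (E k)) (hΓne : Γ.Nonempty)
    (hΓc : IsCompact Γ) (hΓ : Γ ⊆ orthant k)
    (qn : ℕ → E k → E k) (sn : ℕ → E k → ℝ)
    (hqn : ∀ n, IsAlloc Γ (qn n)) (hICn : ∀ n, IsIC (qn n) (sn n))
    (hIRn : ∀ n, IsIR (qn n) (sn n)) (hNPTn : ∀ n, IsNPT (sn n))
    (q : E k → E k) (s : E k → ℝ)
    (hq : IsAlloc Γ q) (hIC : IsIC q s) (hIR : IsIR q s) (hNPT : IsNPT s)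
    (hconv : ∀ x : E k,
      Tendsto (fun n => extPayoff (qn n) (sn n) x) atTop (nhds (extPayoff q s x)))
    (hSF : SellerFavorable q s)
    {Ω : Type*} [MeasurableSpace Ω] (P : Measure Ω) [IsProbabilityMeasure P]
    (X : Ω → E k) (hXm : Measurable X) (hXpos : ∀ ω, X ω ∈ orthant k)
    (hXint : Integrable (fun ω => ‖X ω‖) P) :
    limsup (fun n => ∫ ω, sn n (X ω) ∂P) atTop ≤ ∫ ω, s (X ω) ∂P :=
  stmt7_general Γ hΓc qn sn hqn hICn hIRn hNPTn q s hq hIC hIR hNPT hconv hSF P X hXm hXpos hXint
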